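/- Let B = (b₁,…,bₙ) ∈ ℝ^{d×n} be a basis with Gram–Schmidt orthogonalization b̃₁,…,b̃ₙ, let γ ≥ 2 be real, and define α₁ := 1 and αᵢ := max{α_{i−1}, ⌈‖b̃ᵢ‖/(γ^i·‖b₁‖)⌉} for 2 ≤ i ≤ n. Then α₁ ≤ α₂ ≤ … ≤ αₙ, and for every i, if αᵢ < α_{i+1} then ‖b̃_{i+1}‖/α_{i+1} > (γ/2)·(‖b̃ᵢ‖/αᵢ). -/

import Mathlib

/-!
If `α` jumps at step `i + 1`, then `α_{i+1} = ⌈x⌉ ≥ 2` with `x = ‖b̃_{i+1}‖ / (γ^{i+1} ‖b₁‖)`, and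
`⌈x⌉ < 2x` gives `‖b̃_{i+1}‖ / α_{i+1} > γ^{i+1} ‖b₁‖ / 2`. On the other hand `α_i` is at least
`‖b̃_i‖ / (γ^i ‖b₁‖)` (for `i = 1` use `‖b̃₁‖ = ‖b₁‖` and `γ ≥ 1`), so `‖b̃_i‖ / α_i ≤ γ^i ‖b₁‖`,
and multiplying by `γ / 2` yields the claim.
-/

open scoped RealInnerProductSpace BigOperators

noncomputable section

/-- The set of integer linear combinations of `B 0, …, B (n-1)`. -/
def zspan {d n : ℕ} (B : Fin n → EuclideanSpace ℝ (Fin d)) : Set (EuclideanSpace ℝ (Fin d)) :=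
  {x | ∃ c : Fin n → ℤ, x = ∑ i, (c i : ℝ) • B i}

/-- `L` is a lattice of rank `n`: the ℤ-span of `n` ℝ-linearly independent vectors. -/
def IsLattice {d : ℕ} (L : Set (EuclideanSpace ℝ (Fin d))) (n : ℕ) : Prop :=
  ∃ B : Fin n → EuclideanSpace ℝ (Fin d), LinearIndependent ℝ B ∧ L = zspan B

/-- The dual set `S* := {w ∈ span_ℝ S : ⟨w,y⟩ ∈ ℤ for all y ∈ S}`. -/
def dualSet {d : ℕ} (S : Set (EuclideanSpace ℝ (Fin d))) : Set (EuclideanSpace ℝ (Fin d)) :=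
  {w | w ∈ Submodule.span ℝ S ∧ ∀ y ∈ S, ∃ m : ℤ, ⟪w, y⟫ = (m : ℝ)}

/-- Orthogonal projection onto the orthogonal complement of `span_ℝ S`. -/
def projPerp {d : ℕ} (S : Set (EuclideanSpace ℝ (Fin d))) (x : EuclideanSpace ℝ (Fin d)) : EuclideanSpace ℝ (Fin d) :=
  (Submodule.orthogonalProjectionOnto (Submodule.span ℝ S)ᗮ x : EuclideanSpace ℝ (Fin d))

/-- `det(ℒ) = √(det(BᵀB))`, computed from a basis `B` via its Gram matrix. -/
def gramDet {d n : ℕ} (B : Fin n → EuclideanSpace ℝ (Fin d)) : ℝ :=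
  Real.sqrt (Matrix.det (Matrix.of fun i j => ⟪B i, B j⟫))

/-- The Gram–Schmidt orthogonalization `b̃ᵢ = Π_{{b₁,…,b_(i-1)}^⊥}(bᵢ)`. -/
def gsVec {d n : ℕ} (B : Fin n → EuclideanSpace ℝ (Fin d)) (i : Fin n) : EuclideanSpace ℝ (Fin d) :=
  projPerp (B '' {j | j < i}) (B i)

/-- The Gram–Schmidt coefficients `μ_(i,j) = ⟨b̃ᵢ, bⱼ⟩ / ‖b̃ᵢ‖²`. -/
def mu {d n : ℕ} (B : Fin n → EuclideanSpace ℝ (Fin d)) (i j : Fin n) : ℝ :=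
  ⟪gsVec B i, B j⟫ / ‖gsVec B i‖ ^ 2

/-- `B` is an LLL-reduced basis (with parameter δ = 3/4). -/
def IsLLLReduced {d n : ℕ} (B : Fin n → EuclideanSpace ℝ (Fin d)) : Prop :=
  LinearIndependent ℝ B ∧
  (∀ i j : Fin n, i < j → |mu B i j| ≤ 1 / 2) ∧
  (∀ (i : ℕ) (h : i + 1 < n),
    (3 / 4) * ‖gsVec B ⟨i, Nat.lt_of_succ_lt h⟩‖ ^ 2 ≤
      ‖gsVec B ⟨i + 1, h⟩‖ ^ 2 +
        (mu B ⟨i, Nat.lt_of_succ_lt h⟩ ⟨i + 1, h⟩) ^ 2 * ‖gsVec B ⟨i, Nat.lt_of_succ_lt h⟩‖ ^ 2)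

lemma norm_gsVec_le {d n : ℕ} (B : Fin n → EuclideanSpace ℝ (Fin d)) (i : Fin n) :
    ‖gsVec B i‖ ≤ ‖B i‖ :=
  (Submodule.span ℝ (B '' {j | j < i}))ᗮ.norm_orthogonalProjectionOnto_apply_le (B i)

lemma Fin.monotone_of_le_succ {β : Type*} [Preorder β] {n : ℕ} {f : Fin n → β}
    (hf : ∀ (i : ℕ) (h : i + 1 < n), f ⟨i, Nat.lt_of_succ_lt h⟩ ≤ f ⟨i + 1, h⟩) :
    Monotone f := by
  cases n with
  | zero => exact fun i => i.elim0
  | succ m => exact Fin.monotone_iff_le_succ.mpr fun i => hf i (by omega)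

lemma le_mul_of_eq_max_ceil {a b x D : ℝ} (hD : 0 < D) (ha : a = max b ⌈x / D⌉) :
    x ≤ a * D :=
  (div_le_iff₀ hD).mp <| (Int.le_ceil _).trans (ha ▸ le_max_right _ _)

lemma eq_ceil_of_lt_eq_max {a b y : ℝ} (hlt : b < a) (ha : a = max b ⌈y⌉) : a = ⌈y⌉ := by
  rcases max_choice b (⌈y⌉ : ℝ) with hb | hy
  · exact absurd (ha.trans hb) hlt.ne'
  · exact ha.trans hy

lemma half_lt_div_ceil_div {x D : ℝ} (hD : 0 < D) (hceil : 1 < ⌈x / D⌉) :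
    D / 2 < x / ⌈x / D⌉ := by
  have hy : 1 < x / D := by exact_mod_cast Int.lt_ceil.mp hceil
  have hlt : (⌈x / D⌉ : ℝ) < 2 * (x / D) := Int.ceil_lt_two_mul (by linarith)
  have hpos : (0 : ℝ) < ⌈x / D⌉ := by exact_mod_cast one_pos.trans hceil
  rw [lt_div_iff₀ hpos]
  calc D / 2 * ⌈x / D⌉ < D / 2 * (2 * (x / D)) := by gcongr
    _ = x := by field_simp

lemma norm_gsVec_le_mul_pow {d n : ℕ} (hn : 0 < n) (B : Fin n → EuclideanSpace ℝ (Fin d))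
    (hB : LinearIndependent ℝ B) {γ : ℝ} (hγ : 1 ≤ γ) {α : Fin n → ℝ} (hα0 : α ⟨0, hn⟩ = 1)
    (hαrec : ∀ (i : ℕ) (h : i + 1 < n),
      α ⟨i + 1, h⟩ = max (α ⟨i, Nat.lt_of_succ_lt h⟩)
        ((⌈‖gsVec B ⟨i + 1, h⟩‖ / (γ ^ (i + 2) * ‖B ⟨0, hn⟩‖)⌉ : ℤ) : ℝ))
    (i : Fin n) : ‖gsVec B i‖ ≤ α i * (γ ^ (i.val + 1) * ‖B ⟨0, hn⟩‖) := by
  have hb : 0 < ‖B ⟨0, hn⟩‖ := norm_pos_iff.mpr (hB.ne_zero _)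
  obtain ⟨_ | j, hj⟩ := i
  · calc ‖gsVec B ⟨0, hj⟩‖ ≤ ‖B ⟨0, hn⟩‖ := norm_gsVec_le B _
      _ ≤ γ * ‖B ⟨0, hn⟩‖ := le_mul_of_one_le_left hb.le hγ
      _ = _ := by rw [hα0]; ring
  · exact le_mul_of_eq_max_ceil (by positivity) (hαrec j hj)

theorem stmt17 {d n : ℕ} (hn : 0 < n) (B : Fin n → EuclideanSpace ℝ (Fin d))
    (hB : LinearIndependent ℝ B) (γ : ℝ) (hγ : 2 ≤ γ)
    (α : Fin n → ℝ) (hα0 : α ⟨0, hn⟩ = 1)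
    (hαrec : ∀ (i : ℕ) (h : i + 1 < n),
      α ⟨i + 1, h⟩ = max (α ⟨i, Nat.lt_of_succ_lt h⟩)
        ((⌈‖gsVec B ⟨i + 1, h⟩‖ / (γ ^ (i + 2) * ‖B ⟨0, hn⟩‖)⌉ : ℤ) : ℝ)) :
    (∀ i j : Fin n, i ≤ j → α i ≤ α j) ∧
    (∀ (i : ℕ) (h : i + 1 < n),
      α ⟨i, Nat.lt_of_succ_lt h⟩ < α ⟨i + 1, h⟩ →
      (γ / 2) * (‖gsVec B ⟨i, Nat.lt_of_succ_lt h⟩‖ / α ⟨i, Nat.lt_of_succ_lt h⟩) <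
        ‖gsVec B ⟨i + 1, h⟩‖ / α ⟨i + 1, h⟩) := by
  have hmono : Monotone α :=
    Fin.monotone_of_le_succ fun i h => (hαrec i h).symm ▸ le_max_left _ _
  refine ⟨fun _ _ hij => hmono hij, fun i h hlt => ?_⟩
  have hα_one : 1 ≤ α ⟨i, Nat.lt_of_succ_lt h⟩ := hα0 ▸ hmono (Nat.zero_le i)
  have hD : 0 < γ ^ (i + 2) * ‖B ⟨0, hn⟩‖ :=
    mul_pos (by positivity) (norm_pos_iff.mpr (hB.ne_zero _))
  have hceil := eq_ceil_of_lt_eq_max hlt (hαrec i h)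
  have hprev := norm_gsVec_le_mul_pow hn B hB (by linarith) hα0 hαrec ⟨i, Nat.lt_of_succ_lt h⟩
  calc γ / 2 * (‖gsVec B ⟨i, Nat.lt_of_succ_lt h⟩‖ / α ⟨i, Nat.lt_of_succ_lt h⟩)
      ≤ γ / 2 * (γ ^ (i + 1) * ‖B ⟨0, hn⟩‖) := by
        gcongr
        exact (div_le_iff₀' (one_pos.trans_le hα_one)).mpr hprev
    _ = γ ^ (i + 2) * ‖B ⟨0, hn⟩‖ / 2 := by ring
    _ < ‖gsVec B ⟨i + 1, h⟩‖ / α ⟨i + 1, h⟩ := by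
        rw [hceil]
        refine half_lt_div_ceil_div hD ?_
        exact_mod_cast hceil ▸ hα_one.trans_lt hlt
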